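/- arXiv:2002.08142 — 6 statements merged into one kernel-verified Lean document; each statement's English description precedes it below -/
import Mathlib

section
/- Let X be an integer-valued random variable taking values in {-M₋,...,-1,0,1,...,M₊} where M₋, M₊ are positive integers. Then for all ρ ≥ 0, E[|X|^ρ] + 1 ≥ (3 + log(M₋·M₊))^{-ρ} · exp(ρ · H_{1/(1+ρ)}(X)), where H_α(X) = (1/(1-α)) log(Σ_x P_X(x)^α) is the Rényi entropy of order α. -/
open Finset Real

lemma sum_inv_abs_eq_harmonic (n : ℕ) :
    ∑ x ∈ Finset.Icc (1:ℤ) (n:ℤ), (1:ℝ)/|(x:ℝ)| = (harmonic n : ℝ) := by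
  induction n with
  | zero => simp
  | succ n ih =>
    have h : Finset.Icc (1:ℤ) ((n+1 : ℕ):ℤ) = insert ((n:ℤ)+1) (Finset.Icc (1:ℤ) (n:ℤ)) := by
      ext x; simp only [Finset.mem_Icc, Finset.mem_insert]; omega
    have hn : ((n:ℤ)+1) ∉ Finset.Icc (1:ℤ) (n:ℤ) := by
      simp
    rw [h, Finset.sum_insert hn, ih, harmonic_succ]
    have : |((((n:ℤ)+1 : ℤ)) : ℝ)| = (n:ℝ)+1 := by
      push_cast
      rw [abs_of_pos]; positivity
    rw [this]
    push_cast
    ring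

lemma sum_inv_abs_le (n : ℕ) (hn : 0 < n) :
    ∑ x ∈ Finset.Icc (1:ℤ) (n:ℤ), (1:ℝ)/|(x:ℝ)| ≤ 1 + Real.log n := by
  rw [sum_inv_abs_eq_harmonic]
  exact_mod_cast harmonic_le_one_add_log n

/-- Moment–Rényi entropy inequality for bounded integer-valued random variables:
`E[|X|^ρ] + 1 ≥ (3 + log(M₋ M₊))^(-ρ) · exp(ρ · H_{1/(1+ρ)}(X))`. -/
theorem stmt0 (Mm Mp : ℕ) (hMm : 0 < Mm) (hMp : 0 < Mp)
    (p : ℤ → ℝ) (hp : ∀ x, 0 ≤ p x)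
    (hsupp : ∀ x, p x ≠ 0 → x ∈ Finset.Icc (-(Mm : ℤ)) (Mp : ℤ))
    (hsum : ∑ x ∈ Finset.Icc (-(Mm : ℤ)) (Mp : ℤ), p x = 1)
    (ρ : ℝ) (hρ : 0 ≤ ρ) :
    (∑ x ∈ Finset.Icc (-(Mm : ℤ)) (Mp : ℤ), p x * |(x : ℝ)| ^ ρ) + 1 ≥
      (3 + Real.log ((Mm : ℝ) * (Mp : ℝ))) ^ (-ρ) *
        Real.exp (ρ * ((1 / (1 - 1 / (1 + ρ))) *
          Real.log (∑ x ∈ Finset.Icc (-(Mm : ℤ)) (Mp : ℤ), p x ^ (1 / (1 + ρ))))) := by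
  set I := Finset.Icc (-(Mm : ℤ)) (Mp : ℤ) with hI
  have hA : 0 ≤ ∑ x ∈ I, p x * |(x : ℝ)| ^ ρ := by
    apply Finset.sum_nonneg; intro x _
    exact mul_nonneg (hp x) (Real.rpow_nonneg (abs_nonneg _) _)
  rcases eq_or_lt_of_le hρ with hρ0 | hρpos
  · -- ρ = 0
    rw [← hρ0]
    simp only [neg_zero, Real.rpow_zero, zero_mul, Real.exp_zero, one_mul, mul_one]
    linarith
  -- ρ > 0
  have h1ρ : (0:ℝ) < 1 + ρ := by linarith
  set α : ℝ := 1 / (1 + ρ) with hα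
  have hαpos : 0 < α := by positivity
  set S := ∑ x ∈ I, p x ^ α with hS
  set C := 3 + Real.log ((Mm : ℝ) * (Mp : ℝ)) with hC
  have hlogMM : 0 ≤ Real.log ((Mm : ℝ) * (Mp : ℝ)) := by
    apply Real.log_nonneg
    have h1 : (1:ℝ) ≤ (Mm:ℝ) := by exact_mod_cast hMm
    have h2 : (1:ℝ) ≤ (Mp:ℝ) := by exact_mod_cast hMp
    nlinarith
  have hCpos : 0 < C := by rw [hC]; linarith
  -- S > 0
  have hSpos : 0 < S := by
    apply Finset.sum_pos'
    · intro x _; exact Real.rpow_nonneg (hp x) _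
    · by_contra hcon
      push_neg at hcon
      have : ∀ x ∈ I, p x = 0 := by
        intro x hx
        have := hcon x hx
        have hnn := Real.rpow_nonneg (hp x) α
        have hz : p x ^ α = 0 := le_antisymm this hnn
        by_contra hne
        have := Real.rpow_pos_of_pos (lt_of_le_of_ne (hp x) (Ne.symm hne)) α
        linarith
      rw [Finset.sum_eq_zero this] at hsum
      norm_num at hsum
  -- rewrite exp as S ^ (1+ρ)
  have hexp : Real.exp (ρ * ((1 / (1 - α)) * Real.log S)) = S ^ (1 + ρ) := by
    have h1 : 1 / (1 - α) = (1 + ρ) / ρ := by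
      rw [hα]; field_simp
      rw [show (1:ℝ) + ρ - 1 = ρ by ring]; exact div_self hρpos.ne'
    rw [h1, Real.rpow_def_of_pos hSpos]
    congr 1
    field_simp
  rw [hexp, ge_iff_le]
  -- Hölder
  have hpq : Real.HolderConjugate (1 + ρ) ((1 + ρ) / ρ) := by
    rw [Real.holderConjugate_iff]
    constructor
    · linarith
    · field_simp
  set f : ℤ → ℝ := fun x => (p x * (1 + |(x:ℝ)| ^ ρ)) ^ α with hf
  set g : ℤ → ℝ := fun x => (1 + |(x:ℝ)| ^ ρ) ^ (-α) with hg
  have hbpos : ∀ x : ℤ, (0:ℝ) < 1 + |(x:ℝ)| ^ ρ := by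
    intro x
    have := Real.rpow_nonneg (abs_nonneg ((x:ℤ):ℝ)) ρ
    linarith
  have hfg : ∀ x : ℤ, f x * g x = p x ^ α := by
    intro x
    rw [hf, hg]
    simp only
    rw [Real.mul_rpow (hp x) (hbpos x).le, mul_assoc, ← Real.rpow_add (hbpos x)]
    simp
  have holder : S ≤ (∑ x ∈ I, f x ^ (1 + ρ)) ^ (1 / (1 + ρ)) *
      (∑ x ∈ I, g x ^ ((1 + ρ) / ρ)) ^ (1 / ((1 + ρ) / ρ)) := by
    have := Real.inner_le_Lp_mul_Lq_of_nonneg (s := I) hpq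
      (f := f) (g := g)
      (fun i _ => Real.rpow_nonneg (mul_nonneg (hp i) (hbpos i).le) _)
      (fun i _ => Real.rpow_nonneg (hbpos i).le _)
    calc S = ∑ x ∈ I, f x * g x := by
              apply Finset.sum_congr rfl; intro x _; rw [hfg x]
      _ ≤ _ := this
  have hα1 : α * (1 + ρ) = 1 := by
    rw [hα]; field_simp
  have hfP : ∀ x : ℤ, f x ^ (1 + ρ) = p x * (1 + |(x:ℝ)| ^ ρ) := by
    intro x
    rw [hf]
    simp only
    rw [← Real.rpow_mul (mul_nonneg (hp x) (hbpos x).le), hα1, Real.rpow_one]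
  have hgQ : ∀ x : ℤ, g x ^ ((1 + ρ) / ρ) = (1 + |(x:ℝ)| ^ ρ) ^ (-(1/ρ)) := by
    intro x
    rw [hg]
    simp only
    rw [← Real.rpow_mul (hbpos x).le]
    congr 1
    rw [hα]
    field_simp
  -- first sum equals A + 1
  have hsum1 : ∑ x ∈ I, f x ^ (1 + ρ) = (∑ x ∈ I, p x * |(x:ℝ)| ^ ρ) + 1 := by
    calc ∑ x ∈ I, f x ^ (1 + ρ) = ∑ x ∈ I, (p x * |(x:ℝ)| ^ ρ + p x) := by
          apply Finset.sum_congr rfl; intro x _; rw [hfP x]; ring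
      _ = (∑ x ∈ I, p x * |(x:ℝ)| ^ ρ) + 1 := by rw [Finset.sum_add_distrib, hsum]
  -- second sum bounded by C
  set T := ∑ x ∈ I, g x ^ ((1 + ρ) / ρ) with hT
  have hTnonneg : 0 ≤ T := by
    apply Finset.sum_nonneg; intro x _
    exact Real.rpow_nonneg (Real.rpow_nonneg (hbpos x).le _) _
  have hTle : T ≤ C := by
    have hterm : ∀ x : ℤ, g x ^ ((1 + ρ) / ρ) ≤
        (if x = 0 then (1:ℝ) else 1 / |(x:ℝ)|) := by
      intro x
      rw [hgQ x]
      by_cases hx : x = 0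
      · simp [hx, Real.zero_rpow hρpos.ne']
      · simp only [hx, if_false]
        have habs : (0:ℝ) < |(x:ℝ)| := abs_pos.mpr (Int.cast_ne_zero.mpr hx)
        have hb : |(x:ℝ)| ^ ρ ≤ 1 + |(x:ℝ)| ^ ρ := by linarith
        have hbp : (0:ℝ) < |(x:ℝ)| ^ ρ := Real.rpow_pos_of_pos habs ρ
        calc (1 + |(x:ℝ)| ^ ρ) ^ (-(1/ρ)) ≤ (|(x:ℝ)| ^ ρ) ^ (-(1/ρ)) := by
              apply Real.rpow_le_rpow_of_nonpos hbp hb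
              simp only [neg_nonpos]
              positivity
          _ = 1 / |(x:ℝ)| := by
              rw [← Real.rpow_mul habs.le]
              rw [mul_neg, mul_one_div, div_self hρpos.ne', Real.rpow_neg_one]
              rw [one_div]
    have hsplit : T ≤ ∑ x ∈ I, (if x = 0 then (1:ℝ) else 1 / |(x:ℝ)|) :=
      Finset.sum_le_sum fun x _ => hterm x
    have hIeq : I = Finset.Icc (-(Mm:ℤ)) (-1) ∪ Finset.Icc (0:ℤ) (Mp:ℤ) := by
      rw [hI]; ext x
      simp only [Finset.mem_Icc, Finset.mem_union]
      omega
    have hdisj : Disjoint (Finset.Icc (-(Mm:ℤ)) (-1)) (Finset.Icc (0:ℤ) (Mp:ℤ)) := by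
      rw [Finset.disjoint_left]
      intro x hx hx'
      simp only [Finset.mem_Icc] at hx hx'
      omega
    have hI2 : Finset.Icc (0:ℤ) (Mp:ℤ) = insert (0:ℤ) (Finset.Icc (1:ℤ) (Mp:ℤ)) := by
      ext x; simp only [Finset.mem_Icc, Finset.mem_insert]; omega
    have hneg : ∑ x ∈ Finset.Icc (-(Mm:ℤ)) (-1), (if x = 0 then (1:ℝ) else 1 / |(x:ℝ)|)
        = ∑ x ∈ Finset.Icc (1:ℤ) (Mm:ℤ), (1:ℝ) / |(x:ℝ)| := by
      have himg : Finset.Icc (-(Mm:ℤ)) (-1)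
          = Finset.image (fun x : ℤ => -x) (Finset.Icc (1:ℤ) (Mm:ℤ)) := by
        ext x
        simp only [Finset.mem_image, Finset.mem_Icc]
        constructor
        · intro h; exact ⟨-x, by omega, by ring⟩
        · rintro ⟨a, ha, rfl⟩; omega
      rw [himg, Finset.sum_image (by intro a _ b _ h; simp only [neg_inj] at h; exact h)]
      apply Finset.sum_congr rfl
      intro x hx
      simp only [Finset.mem_Icc] at hx
      have hx0 : -x ≠ 0 := by omega
      simp only [hx0, if_false, Int.cast_neg, abs_neg]
    have hpos : ∑ x ∈ Finset.Icc (1:ℤ) (Mp:ℤ), (if x = 0 then (1:ℝ) else 1 / |(x:ℝ)|)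
        = ∑ x ∈ Finset.Icc (1:ℤ) (Mp:ℤ), (1:ℝ) / |(x:ℝ)| := by
      apply Finset.sum_congr rfl
      intro x hx
      simp only [Finset.mem_Icc] at hx
      have : x ≠ 0 := by omega
      simp [this]
    calc T ≤ ∑ x ∈ I, (if x = 0 then (1:ℝ) else 1 / |(x:ℝ)|) := hsplit
      _ = (∑ x ∈ Finset.Icc (-(Mm:ℤ)) (-1), (if x = 0 then (1:ℝ) else 1 / |(x:ℝ)|))
          + ∑ x ∈ Finset.Icc (0:ℤ) (Mp:ℤ), (if x = 0 then (1:ℝ) else 1 / |(x:ℝ)|) := by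
          rw [hIeq, Finset.sum_union hdisj]
      _ = (∑ x ∈ Finset.Icc (1:ℤ) (Mm:ℤ), (1:ℝ) / |(x:ℝ)|)
          + (1 + ∑ x ∈ Finset.Icc (1:ℤ) (Mp:ℤ), (1:ℝ) / |(x:ℝ)|) := by
          rw [hneg, hI2, Finset.sum_insert (by simp), hpos]
          norm_num
      _ ≤ (1 + Real.log Mm) + (1 + (1 + Real.log Mp)) := by
          have h1 := sum_inv_abs_le Mm hMm
          have h2 := sum_inv_abs_le Mp hMp
          linarith
      _ = C := by
          rw [hC, Real.log_mul (by positivity) (by positivity)]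
          ring
  -- assemble
  set A := ∑ x ∈ I, p x * |(x:ℝ)| ^ ρ with hAdef
  have hA1 : (0:ℝ) < A + 1 := by linarith
  have hstep : S ^ (1 + ρ) ≤ (A + 1) * C ^ ρ := by
    have hrhs_nonneg : 0 ≤ (∑ x ∈ I, f x ^ (1 + ρ)) ^ (1 / (1 + ρ)) :=
      Real.rpow_nonneg (by rw [hsum1]; linarith) _
    have h2 : S ^ (1 + ρ) ≤ ((∑ x ∈ I, f x ^ (1 + ρ)) ^ (1 / (1 + ρ)) *
        T ^ (1 / ((1 + ρ) / ρ))) ^ (1 + ρ) := by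
      apply Real.rpow_le_rpow hSpos.le holder (by linarith)
    have h3 : ((∑ x ∈ I, f x ^ (1 + ρ)) ^ (1 / (1 + ρ)) *
        T ^ (1 / ((1 + ρ) / ρ))) ^ (1 + ρ) = (A + 1) * T ^ ρ := by
      rw [Real.mul_rpow hrhs_nonneg (Real.rpow_nonneg hTnonneg _)]
      rw [← Real.rpow_mul (by rw [hsum1]; linarith), ← Real.rpow_mul hTnonneg]
      rw [one_div_mul_cancel (by linarith : (1:ℝ)+ρ ≠ 0), Real.rpow_one, hsum1]
      congr 2
      field_simp
    rw [h3] at h2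
    have h4 : T ^ ρ ≤ C ^ ρ := Real.rpow_le_rpow hTnonneg hTle hρ
    calc S ^ (1 + ρ) ≤ (A + 1) * T ^ ρ := h2
      _ ≤ (A + 1) * C ^ ρ := by
          apply mul_le_mul_of_nonneg_left h4 hA1.le
  calc C ^ (-ρ) * S ^ (1 + ρ) ≤ C ^ (-ρ) * ((A + 1) * C ^ ρ) := by
        apply mul_le_mul_of_nonneg_left hstep (Real.rpow_nonneg hCpos.le _)
    _ = (A + 1) * (C ^ (-ρ) * C ^ ρ) := by ring
    _ = A + 1 := by
        rw [← Real.rpow_add hCpos]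
        simp
end

section
/- Let X be an integer-valued random variable and let 0 < ρ < m. Then E[|X|^m] + 1 ≥ (1 + 2ζ(m/ρ))^{-ρ} · exp(ρ · H_{1/(1+ρ)}(X)), where ζ(s) = Σ_{n=1}^∞ n^{-s} is the Riemann zeta function and H_α denotes Rényi entropy of order α. -/
open Real

/-- Moment–Rényi entropy inequality for integer-valued random variables:
`E[|X|^m] + 1 ≥ (1 + 2ζ(m/ρ))^(-ρ) · exp(ρ · H_{1/(1+ρ)}(X))` for `0 < ρ < m`. -/
theorem stmt1 (p : ℤ → ℝ) (hp : ∀ x, 0 ≤ p x) (hpsum : Summable p)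
    (hpmf : ∑' x : ℤ, p x = 1)
    (m ρ : ℝ) (hρ : 0 < ρ) (hm : ρ < m)
    (hmom : Summable (fun x : ℤ => p x * |(x : ℝ)| ^ m))
    (hren : Summable (fun x : ℤ => p x ^ (1 / (1 + ρ)))) :
    (∑' x : ℤ, p x * |(x : ℝ)| ^ m) + 1 ≥
      (1 + 2 * (∑' n : ℕ, ((n : ℝ) + 1) ^ (-(m / ρ)))) ^ (-ρ) *
        Real.exp (ρ * ((1 / (1 - 1 / (1 + ρ))) *
          Real.log (∑' x : ℤ, p x ^ (1 / (1 + ρ))))) := by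
  have h1ρ : (0:ℝ) < 1 + ρ := by linarith
  have hmpos : 0 < m := hρ.trans hm
  have hmρ : 1 < m / ρ := (one_lt_div hρ).2 hm
  set Z : ℝ := ∑' n : ℕ, ((n : ℝ) + 1) ^ (-(m / ρ)) with hZdef
  set S : ℝ := ∑' x : ℤ, p x ^ (1 / (1 + ρ)) with hSdef
  set M : ℝ := ∑' x : ℤ, p x * |(x : ℝ)| ^ m with hMdef
  set w : ℤ → ℝ := fun x => 1 + |(x : ℝ)| ^ m with hwdef
  have hwpos : ∀ x : ℤ, 0 < w x := fun x => by
    have : (0:ℝ) ≤ |(x:ℝ)| ^ m := rpow_nonneg (abs_nonneg _) m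
    simp only [hwdef]; linarith
  set u : ℤ → ℝ := fun x => w x ^ (-(1 / ρ)) with hudef
  have hunonneg : ∀ x : ℤ, 0 ≤ u x := fun x => rpow_nonneg (hwpos x).le _
  have hu0 : u 0 = 1 := by
    simp only [hudef, hwdef]
    norm_num [Real.zero_rpow (ne_of_gt hmpos)]
  have huneg : ∀ x : ℤ, u (-x) = u x := fun x => by
    simp [hudef, hwdef]
  -- zeta summability
  have hζsum : Summable (fun n : ℕ => ((n : ℝ) + 1) ^ (-(m / ρ))) := by
    have h := (Real.summable_nat_rpow (p := -(m/ρ))).2 (by linarith)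
    have h2 := (summable_nat_add_iff (f := fun n : ℕ => (n : ℝ) ^ (-(m/ρ))) 1).2 h
    refine h2.congr fun n => ?_
    push_cast
    ring_nf
  have hZnonneg : 0 ≤ Z :=
    tsum_nonneg fun n => rpow_nonneg (by positivity) _
  -- termwise comparison on positive part
  have hucomp : ∀ n : ℕ, u ((n:ℤ) + 1) ≤ ((n : ℝ) + 1) ^ (-(m / ρ)) := by
    intro n
    have hb : (0:ℝ) < ((n:ℝ)+1) ^ m := rpow_pos_of_pos (by positivity) _
    have hle : ((n:ℝ)+1) ^ m ≤ w ((n:ℤ)+1) := by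
      simp only [hwdef]
      have habs : |((((n:ℤ)+1) : ℤ) : ℝ)| = (n:ℝ) + 1 := by
        push_cast; rw [abs_of_pos (by positivity)]
      rw [habs]; linarith
    have h1 := Real.rpow_le_rpow_of_nonpos hb hle (neg_nonpos.2 (by positivity) : -(1/ρ) ≤ 0)
    calc u ((n:ℤ)+1) ≤ (((n:ℝ)+1) ^ m) ^ (-(1/ρ)) := h1
      _ = ((n:ℝ)+1) ^ (-(m/ρ)) := by
          rw [← Real.rpow_mul (by positivity), mul_neg, mul_one_div]
  -- summability of u over ℕ
  have husumnat : Summable (fun n : ℕ => u (n:ℤ)) := by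
    rw [← summable_nat_add_iff 1]
    refine Summable.of_nonneg_of_le (fun n => hunonneg _) (fun n => ?_) hζsum
    have := hucomp n
    push_cast at this ⊢
    exact this
  have husum : Summable u := by
    refine husumnat.of_nat_of_neg (husumnat.congr fun n => ?_)
    rw [huneg]
  -- the bound on the full integer sum of u
  have hZbound : ∑' x : ℤ, u x ≤ 1 + 2 * Z := by
    have hdecomp := Summable.tsum_of_nat_of_neg husumnat (husumnat.congr fun n => (huneg n).symm)
    have hnegeq : (∑' n : ℕ, u (-(n:ℤ))) = ∑' n : ℕ, u (n:ℤ) :=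
      tsum_congr fun n => huneg n
    have hnat : (∑' n : ℕ, u (n:ℤ)) ≤ 1 + Z := by
      have hsplit := Summable.tsum_eq_zero_add husumnat
      have htail : (∑' n : ℕ, u ((n:ℤ) + 1)) ≤ Z :=
        Summable.tsum_le_tsum (fun n => hucomp n)
          (((summable_nat_add_iff 1).2 husumnat).congr fun n => by push_cast; ring_nf) hζsum
      have heq : (∑' n : ℕ, u (((n+1:ℕ)):ℤ)) = ∑' n : ℕ, u ((n:ℤ)+1) :=
        tsum_congr fun n => by push_cast; ring_nf
      rw [hsplit, heq]
      simp only [Nat.cast_zero, hu0]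
      linarith
    rw [hdecomp, hnegeq, hu0]
    linarith
  -- Hölder
  set F : ℤ → ℝ := fun x => (p x * w x) ^ (1 / (1 + ρ)) with hFdef
  set G : ℤ → ℝ := fun x => w x ^ (-(1 / (1 + ρ))) with hGdef
  have hconj : (1 + ρ).HolderConjugate ((1 + ρ) / ρ) := by
    rw [Real.holderConjugate_iff]
    constructor
    · linarith
    · field_simp
  have hFq : ∀ x, F x ^ (1 + ρ) = p x + p x * |(x:ℝ)| ^ m := by
    intro x
    simp only [hFdef]
    rw [← Real.rpow_mul (mul_nonneg (hp x) (hwpos x).le),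
      one_div_mul_cancel (ne_of_gt h1ρ), Real.rpow_one]
    simp only [hwdef]
    ring
  have hGq : ∀ x, G x ^ ((1 + ρ) / ρ) = u x := by
    intro x
    simp only [hGdef, hudef]
    rw [← Real.rpow_mul (hwpos x).le]
    congr 1
    field_simp
  have hFG : ∀ x, F x * G x = p x ^ (1 / (1 + ρ)) := by
    intro x
    simp only [hFdef, hGdef]
    rw [Real.mul_rpow (hp x) (hwpos x).le, mul_assoc,
      ← Real.rpow_add (hwpos x), add_neg_cancel, Real.rpow_zero, mul_one]
  have hFqsum : Summable (fun x => F x ^ (1 + ρ)) := by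
    refine (hpsum.add hmom).congr fun x => (hFq x).symm
  have hGqsum : Summable (fun x => G x ^ ((1 + ρ) / ρ)) :=
    husum.congr fun x => (hGq x).symm
  have hFqtsum : (∑' x : ℤ, F x ^ (1 + ρ)) = 1 + M := by
    calc (∑' x : ℤ, F x ^ (1 + ρ)) = ∑' x : ℤ, (p x + p x * |(x:ℝ)| ^ m) :=
          tsum_congr hFq
      _ = 1 + M := by rw [Summable.tsum_add hpsum hmom, hpmf]
  have hGqtsum : (∑' x : ℤ, G x ^ ((1 + ρ) / ρ)) = ∑' x : ℤ, u x := tsum_congr hGq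
  have hFnn : ∀ x, 0 ≤ F x := fun x => rpow_nonneg (mul_nonneg (hp x) (hwpos x).le) _
  have hGnn : ∀ x, 0 ≤ G x := fun x => rpow_nonneg (hwpos x).le _
  have holder := inner_le_Lp_mul_Lq_tsum_of_nonneg hconj hFnn hGnn hFqsum hGqsum
  have hSle : S ≤ (1 + M) ^ (1 / (1 + ρ)) * (∑' x : ℤ, u x) ^ (ρ / (1 + ρ)) := by
    have h1 : (∑' x : ℤ, F x * G x) = S := tsum_congr hFG
    have h2 : 1 / ((1 + ρ) / ρ) = ρ / (1 + ρ) := by field_simp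
    rw [h1, hFqtsum, hGqtsum, h2] at holder
    exact holder
  -- positivity of S
  have hMnn : 0 ≤ M := tsum_nonneg fun x => mul_nonneg (hp x) (rpow_nonneg (abs_nonneg _) _)
  have hSpos : 0 < S := by
    obtain ⟨x₀, hx₀⟩ : ∃ x, 0 < p x := by
      by_contra h
      push_neg at h
      have : ∀ x, p x = 0 := fun x => le_antisymm (h x) (hp x)
      simp [this] at hpmf
    have hterm : 0 < p x₀ ^ (1 / (1 + ρ)) := rpow_pos_of_pos hx₀ _
    exact hterm.trans_le (Summable.le_tsum hren x₀ fun j _ => rpow_nonneg (hp j) _)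
  -- rewrite exp term
  have hexp : Real.exp (ρ * ((1 / (1 - 1 / (1 + ρ))) * Real.log S)) = S ^ (1 + ρ) := by
    rw [Real.rpow_def_of_pos hSpos]
    congr 1
    have : 1 - 1 / (1 + ρ) = ρ / (1 + ρ) := by field_simp; ring
    rw [this]
    field_simp
  -- raise Hölder to the power 1+ρ
  have hU : 0 ≤ ∑' x : ℤ, u x := tsum_nonneg hunonneg
  have hS1ρ : S ^ (1 + ρ) ≤ (1 + M) * (∑' x : ℤ, u x) ^ ρ := by
    have h1 : S ^ (1 + ρ) ≤ ((1 + M) ^ (1 / (1 + ρ)) * (∑' x : ℤ, u x) ^ (ρ / (1 + ρ))) ^ (1 + ρ) :=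
      Real.rpow_le_rpow (le_of_lt hSpos) hSle h1ρ.le
    have h2 : ((1 + M) ^ (1 / (1 + ρ)) * (∑' x : ℤ, u x) ^ (ρ / (1 + ρ))) ^ (1 + ρ)
        = (1 + M) * (∑' x : ℤ, u x) ^ ρ := by
      rw [Real.mul_rpow (rpow_nonneg (by linarith) _) (rpow_nonneg hU _),
        ← Real.rpow_mul (by linarith), ← Real.rpow_mul hU,
        one_div_mul_cancel (ne_of_gt h1ρ), Real.rpow_one,
        div_mul_cancel₀ _ (ne_of_gt h1ρ)]
    exact h1.trans_eq h2
  -- final combination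
  have hCpos : (0:ℝ) < 1 + 2 * Z := by linarith
  have hUC : (∑' x : ℤ, u x) ^ ρ ≤ (1 + 2 * Z) ^ ρ :=
    Real.rpow_le_rpow hU hZbound hρ.le
  have hfin : (1 + 2 * Z) ^ (-ρ) * S ^ (1 + ρ) ≤ 1 + M := by
    have hCinv : (0:ℝ) ≤ (1 + 2 * Z) ^ (-ρ) := (rpow_pos_of_pos hCpos _).le
    calc (1 + 2 * Z) ^ (-ρ) * S ^ (1 + ρ)
        ≤ (1 + 2 * Z) ^ (-ρ) * ((1 + M) * (1 + 2 * Z) ^ ρ) := by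
          refine mul_le_mul_of_nonneg_left ?_ hCinv
          exact hS1ρ.trans (mul_le_mul_of_nonneg_left hUC (by linarith))
      _ = (1 + M) * ((1 + 2 * Z) ^ (-ρ) * (1 + 2 * Z) ^ ρ) := by ring
      _ = 1 + M := by
          rw [← Real.rpow_add hCpos, neg_add_cancel, Real.rpow_zero, mul_one]
  rw [ge_iff_le, hexp]
  linarith
end

section
/- Let X be an integer-valued random variable with pmf P_X, and define A(x) = |x| for x ≠ 0 and A(0) = 1. Then for every ρ > 0 and m > ρ, E[|X|^m] + 1 ≥ (Σ_{x∈ℤ} P_X(x)^{1/(1+ρ)})^{1+ρ} · (Σ_{x∈ℤ} A(x)^{-m/ρ})^{-ρ}. -/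
open Real

/-- With `A(x) = |x|` for `x ≠ 0` and `A(0) = 1`, for `0 < ρ < m`:
`E[|X|^m] + 1 ≥ (Σ P_X(x)^{1/(1+ρ)})^{1+ρ} · (Σ A(x)^{-m/ρ})^{-ρ}`. -/
theorem stmt4 (p : ℤ → ℝ) (hp : ∀ x, 0 ≤ p x) (hpsum : Summable p)
    (hpmf : ∑' x : ℤ, p x = 1)
    (ρ m : ℝ) (hρ : 0 < ρ) (hm : ρ < m)
    (hmom : Summable (fun x : ℤ => p x * |(x : ℝ)| ^ m))
    (hren : Summable (fun x : ℤ => p x ^ (1 / (1 + ρ)))) :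
    (∑' x : ℤ, p x * |(x : ℝ)| ^ m) + 1 ≥
      (∑' x : ℤ, p x ^ (1 / (1 + ρ))) ^ (1 + ρ) *
        (∑' x : ℤ, (if x = 0 then (1 : ℝ) else |(x : ℝ)|) ^ (-(m / ρ))) ^ (-ρ) := by
  set A : ℤ → ℝ := fun x => if x = 0 then (1 : ℝ) else |(x : ℝ)| with hA
  have hm0 : 0 < m := hρ.trans hm
  have hP : (0:ℝ) < 1 + ρ := by linarith
  have hA1 : ∀ x, 1 ≤ A x := by
    intro x
    by_cases hx : x = 0
    · simp [hA, hx]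
    · simp only [hA, hx, if_false]
      rw [← Int.cast_abs]
      exact_mod_cast Int.one_le_abs hx
  have hApos : ∀ x, 0 < A x := fun x => lt_of_lt_of_le one_pos (hA1 x)
  have hpq : (1 + ρ).HolderConjugate ((1 + ρ)/ρ) := by
    rw [Real.holderConjugate_iff]
    constructor
    · linarith
    · rw [inv_div]
      field_simp
  -- functions for Hölder
  set f : ℤ → ℝ := fun x => (p x * A x ^ m) ^ (1/(1+ρ)) with hf
  set g : ℤ → ℝ := fun x => A x ^ (-(m/(1+ρ))) with hg
  have hfnn : ∀ x, 0 ≤ f x := fun x => Real.rpow_nonneg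
    (mul_nonneg (hp x) (Real.rpow_nonneg (hApos x).le m)) _
  have hgnn : ∀ x, 0 ≤ g x := fun x => Real.rpow_nonneg (hApos x).le _
  have hfP : ∀ x, f x ^ (1+ρ) = p x * A x ^ m := by
    intro x
    rw [hf, ← Real.rpow_mul (mul_nonneg (hp x) (Real.rpow_nonneg (hApos x).le m)),
      one_div_mul_cancel (ne_of_gt hP), Real.rpow_one]
  have hgQ : ∀ x, g x ^ ((1+ρ)/ρ) = A x ^ (-(m/ρ)) := by
    intro x
    rw [hg, ← Real.rpow_mul (hApos x).le]
    congr 1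
    field_simp
  have hfg : ∀ x, f x * g x = p x ^ (1/(1+ρ)) := by
    intro x
    show (p x * A x ^ m) ^ (1/(1+ρ)) * A x ^ (-(m/(1+ρ))) = p x ^ (1/(1+ρ))
    rw [Real.mul_rpow (hp x) (Real.rpow_nonneg (hApos x).le m),
      ← Real.rpow_mul (hApos x).le, mul_assoc, ← Real.rpow_add (hApos x)]
    have : m * (1/(1+ρ)) + -(m/(1+ρ)) = 0 := by field_simp; ring
    rw [this, Real.rpow_zero, mul_one]
  -- summability of f^(1+ρ)
  have hzero_rpow : (0:ℝ) ^ m = 0 := Real.zero_rpow (ne_of_gt hm0)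
  have hsplit : ∀ x, p x * A x ^ m
      = p x * |(x:ℝ)| ^ m + (if x = 0 then p 0 else 0) := by
    intro x
    by_cases hx : x = 0
    · subst hx
      simp [hA, hzero_rpow]
    · simp [hA, hx]
  have hesum : Summable (fun x : ℤ => if x = 0 then p 0 else 0) := by
    apply summable_of_ne_finset_zero (s := {0})
    intro b hb
    simp only [Finset.mem_singleton] at hb
    simp [hb]
  have hfPsum : Summable (fun x : ℤ => f x ^ (1+ρ)) := by
    refine Summable.congr (hmom.add hesum) ?_
    intro x
    rw [hfP x, hsplit x]
  -- summability of g^Q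
  have hmr : 1 < m/ρ := (one_lt_div hρ).mpr hm
  have hsplit2 : ∀ x : ℤ, A x ^ (-(m/ρ))
      = |(x:ℝ)| ^ (-(m/ρ)) + (if x = 0 then (1:ℝ) else 0) := by
    intro x
    by_cases hx : x = 0
    · subst hx
      simp [hA, Real.zero_rpow (neg_ne_zero.mpr (ne_of_gt (div_pos hm0 hρ)))]
    · simp [hA, hx]
  have hesum2 : Summable (fun x : ℤ => if x = 0 then (1:ℝ) else 0) := by
    apply summable_of_ne_finset_zero (s := {0})
    intro b hb
    simp only [Finset.mem_singleton] at hb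
    simp [hb]
  have hgQsum : Summable (fun x : ℤ => g x ^ ((1+ρ)/ρ)) := by
    refine Summable.congr ((Real.summable_abs_int_rpow hmr).add hesum2) ?_
    intro x
    rw [hgQ x, hsplit2 x]
  -- Hölder
  have hold := inner_le_Lp_mul_Lq_tsum_of_nonneg hpq hfnn hgnn hfPsum hgQsum
  rw [tsum_congr hfg] at hold
  set S1 : ℝ := ∑' x : ℤ, f x ^ (1+ρ) with hS1
  set S2 : ℝ := ∑' x : ℤ, g x ^ ((1+ρ)/ρ) with hS2
  have hS2eq : S2 = ∑' x : ℤ, A x ^ (-(m/ρ)) := tsum_congr hgQ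
  have hS1nn : 0 ≤ S1 := tsum_nonneg fun x => Real.rpow_nonneg (hfnn x) _
  have hS2pos : 0 < S2 := by
    rw [hS2eq]
    have : (0:ℝ) < A 0 ^ (-(m/ρ)) := Real.rpow_pos_of_pos (hApos 0) _
    have hs : Summable (fun x : ℤ => A x ^ (-(m/ρ))) := hgQsum.congr hgQ
    exact lt_of_lt_of_le this (Summable.le_tsum hs 0 fun x _ => Real.rpow_nonneg (hApos x).le _)
  -- raise to power 1+ρ
  have key : (∑' x : ℤ, p x ^ (1/(1+ρ))) ^ (1+ρ) ≤ S1 * S2 ^ ρ := by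
    have hnn : 0 ≤ ∑' x : ℤ, p x ^ (1/(1+ρ)) :=
      tsum_nonneg fun x => Real.rpow_nonneg (hp x) _
    calc (∑' x : ℤ, p x ^ (1/(1+ρ))) ^ (1+ρ)
        ≤ (S1 ^ (1/(1+ρ)) * S2 ^ (1/((1+ρ)/ρ))) ^ (1+ρ) := by
          apply Real.rpow_le_rpow hnn hold hP.le
      _ = S1 * S2 ^ ρ := by
          rw [Real.mul_rpow (Real.rpow_nonneg hS1nn _) (Real.rpow_nonneg hS2pos.le _),
            ← Real.rpow_mul hS1nn, ← Real.rpow_mul hS2pos.le,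
            one_div_mul_cancel (ne_of_gt hP), Real.rpow_one]
          congr 2
          field_simp
  -- bound S1 by moment + 1
  have hS1le : S1 ≤ (∑' x : ℤ, p x * |(x:ℝ)| ^ m) + 1 := by
    have : S1 = (∑' x : ℤ, p x * |(x:ℝ)| ^ m) + ∑' x : ℤ, (if x = 0 then p 0 else 0) := by
      rw [hS1, tsum_congr hfP, tsum_congr hsplit, Summable.tsum_add hmom hesum]
    rw [this]
    gcongr
    have h0 : (∑' x : ℤ, (if x = 0 then p 0 else 0)) = p 0 := by
      rw [tsum_eq_single 0]
      · simp
      · intro b hb; simp [hb]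
    rw [h0]
    calc p 0 ≤ ∑' x : ℤ, p x := Summable.le_tsum hpsum 0 (fun x _ => hp x)
      _ = 1 := hpmf
  -- conclude
  rw [ge_iff_le, ← hS2eq]
  calc (∑' x : ℤ, p x ^ (1/(1+ρ))) ^ (1+ρ) * S2 ^ (-ρ)
      ≤ (S1 * S2 ^ ρ) * S2 ^ (-ρ) :=
        mul_le_mul_of_nonneg_right key (Real.rpow_nonneg hS2pos.le _)
    _ = S1 := by
        rw [mul_assoc, ← Real.rpow_add hS2pos, add_neg_cancel, Real.rpow_zero, mul_one]
    _ ≤ _ := hS1le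
end

section
/- Let X, Y be finitely-valued random variables with strictly positive joint pmf, let i(X;Y) = log(P_{X|Y}(X|Y)/P_X(X)) be the information density, and let ρ > 0. Then E[ E[e^{-ρ i(X;Y)/(1+ρ)} | Y]^{1+ρ} ]^{-1} ≤ E[ e^{ρ i(X;Y)} ]. -/
open Finset Real

/-- Marginal of `X`. -/
noncomputable def margX {α β : Type*} [Fintype β] (P : α → β → ℝ) (x : α) : ℝ :=
  ∑ y, P x y

/-- Marginal of `Y`. -/
noncomputable def margY {α β : Type*} [Fintype α] (P : α → β → ℝ) (y : β) : ℝ :=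
  ∑ x, P x y

/-- Conditional pmf `P_{X|Y}(x|y)`. -/
noncomputable def condXY {α β : Type*} [Fintype α] (P : α → β → ℝ) (x : α) (y : β) : ℝ :=
  P x y / margY P y

/-- Information density `i(x;y)`. -/
noncomputable def infoDen {α β : Type*} [Fintype α] [Fintype β] (P : α → β → ℝ)
    (x : α) (y : β) : ℝ :=
  Real.log (P x y / (margX P x * margY P y))

/-- Jensen for `exp` over a finite weighted sum. -/
lemma exp_sum_le {ι : Type*} [Fintype ι] (w t : ι → ℝ) (hw : ∀ i, 0 ≤ w i)
    (hw1 : ∑ i, w i = 1) :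
    Real.exp (∑ i, w i * t i) ≤ ∑ i, w i * Real.exp (t i) := by
  simpa [smul_eq_mul] using
    convexOn_exp.map_sum_le (t := Finset.univ) (w := w) (p := t)
      (fun i _ => hw i) hw1 (fun i _ => Set.mem_univ _)

/-- Jensen for `x ↦ x⁻¹` over a finite weighted sum of positives. -/
lemma inv_sum_le {ι : Type*} [Fintype ι] (w t : ι → ℝ) (hw : ∀ i, 0 ≤ w i)
    (hw1 : ∑ i, w i = 1) (ht : ∀ i, 0 < t i) :
    (∑ i, w i * t i)⁻¹ ≤ ∑ i, w i * (t i)⁻¹ := by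
  have := (convexOn_zpow (𝕜 := ℝ) (-1)).map_sum_le (t := Finset.univ) (w := w) (p := t)
      (fun i _ => hw i) hw1 (fun i _ => ht i)
  simpa [smul_eq_mul, zpow_neg, zpow_one] using this

/-- `E[E[e^{-ρ i(X;Y)/(1+ρ)}|Y]^{1+ρ}]⁻¹ ≤ E[e^{ρ i(X;Y)}]`. -/
theorem stmt11 {α β : Type*} [Fintype α] [Fintype β] [Nonempty α] [Nonempty β]
    (P : α → β → ℝ) (hP : ∀ x y, 0 < P x y) (hpmf : ∑ x, ∑ y, P x y = 1)
    (ρ : ℝ) (hρ : 0 < ρ) :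
    (∑ y, margY P y *
        (∑ x, condXY P x y * Real.exp (-(ρ * infoDen P x y) / (1 + ρ))) ^ (1 + ρ))⁻¹ ≤
      ∑ x, ∑ y, P x y * Real.exp (ρ * infoDen P x y) := by
  have hρ1 : (0:ℝ) < 1 + ρ := by linarith
  have hmY : ∀ y, 0 < margY P y := fun y =>
    Finset.sum_pos (fun x _ => hP x y) Finset.univ_nonempty
  have hcond : ∀ x y, 0 < condXY P x y := fun x y => div_pos (hP x y) (hmY y)
  have hcond1 : ∀ y, ∑ x, condXY P x y = 1 := by
    intro y
    simp only [condXY, ← Finset.sum_div]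
    rw [div_eq_one_iff_eq (hmY y).ne']
    rfl
  have hmY1 : ∑ y, margY P y = 1 := by
    rw [← hpmf, Finset.sum_comm]; rfl
  set S : β → ℝ := fun y => ∑ x, condXY P x y * infoDen P x y with hS
  set A : β → ℝ := fun y => ∑ x, condXY P x y * Real.exp (-(ρ * infoDen P x y) / (1 + ρ)) with hA
  set B : β → ℝ := fun y => ∑ x, condXY P x y * Real.exp (ρ * infoDen P x y) with hB
  have hApos : ∀ y, 0 < A y := fun y =>
    Finset.sum_pos (fun x _ => mul_pos (hcond x y) (Real.exp_pos _)) Finset.univ_nonempty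
  have hBpos : ∀ y, 0 < B y := fun y =>
    Finset.sum_pos (fun x _ => mul_pos (hcond x y) (Real.exp_pos _)) Finset.univ_nonempty
  -- inner Jensen for A
  have hA1 : ∀ y, Real.exp (-(ρ * S y) / (1 + ρ)) ≤ A y := by
    intro y
    have := exp_sum_le (fun x => condXY P x y) (fun x => -(ρ * infoDen P x y) / (1 + ρ))
      (fun x => (hcond x y).le) (hcond1 y)
    refine le_trans (le_of_eq ?_) this
    congr 1
    rw [hS, Finset.mul_sum, ← Finset.sum_neg_distrib, Finset.sum_div]
    exact Finset.sum_congr rfl fun x _ => by ring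
  have hB1 : ∀ y, Real.exp (ρ * S y) ≤ B y := by
    intro y
    have := exp_sum_le (fun x => condXY P x y) (fun x => ρ * infoDen P x y)
      (fun x => (hcond x y).le) (hcond1 y)
    refine le_trans (le_of_eq ?_) this
    congr 1
    rw [hS, Finset.mul_sum]
    exact Finset.sum_congr rfl fun x _ => by ring
  -- A y ^ (1+ρ) ≥ (B y)⁻¹
  have key : ∀ y, (B y)⁻¹ ≤ A y ^ (1 + ρ) := by
    intro y
    have h1 : Real.exp (-(ρ * S y) / (1 + ρ)) ^ (1 + ρ) ≤ A y ^ (1 + ρ) :=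
      Real.rpow_le_rpow (Real.exp_pos _).le (hA1 y) hρ1.le
    have h2 : Real.exp (-(ρ * S y) / (1 + ρ)) ^ (1 + ρ) = Real.exp (-(ρ * S y)) := by
      rw [← Real.exp_mul]
      congr 1
      field_simp
    calc (B y)⁻¹ ≤ (Real.exp (ρ * S y))⁻¹ :=
          inv_anti₀ (Real.exp_pos _) (hB1 y)
      _ = Real.exp (-(ρ * S y)) := by rw [← Real.exp_neg]
      _ = Real.exp (-(ρ * S y) / (1 + ρ)) ^ (1 + ρ) := h2.symm
      _ ≤ A y ^ (1 + ρ) := h1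
  -- outer Jensen
  have outer : (∑ y, margY P y * B y)⁻¹ ≤ ∑ y, margY P y * A y ^ (1 + ρ) := by
    calc (∑ y, margY P y * B y)⁻¹ ≤ ∑ y, margY P y * (B y)⁻¹ :=
          inv_sum_le (fun y => margY P y) B (fun y => (hmY y).le) hmY1 hBpos
      _ ≤ ∑ y, margY P y * A y ^ (1 + ρ) := by
          apply Finset.sum_le_sum
          intro y _
          exact mul_le_mul_of_nonneg_left (key y) (hmY y).le
  have hTpos : 0 < ∑ y, margY P y * A y ^ (1 + ρ) :=
    Finset.sum_pos (fun y _ => mul_pos (hmY y) (Real.rpow_pos_of_pos (hApos y) _))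
      Finset.univ_nonempty
  have hQBpos : 0 < ∑ y, margY P y * B y :=
    Finset.sum_pos (fun y _ => mul_pos (hmY y) (hBpos y)) Finset.univ_nonempty
  have final : (∑ y, margY P y * A y ^ (1 + ρ))⁻¹ ≤ ∑ y, margY P y * B y := by
    rw [← inv_inv (∑ y, margY P y * B y)]
    exact inv_anti₀ (inv_pos.2 hQBpos) outer
  refine final.trans (le_of_eq ?_)
  rw [Finset.sum_comm]
  apply Finset.sum_congr rfl
  intro y _
  rw [hB, Finset.mul_sum]
  apply Finset.sum_congr rfl
  intro x _
  rw [condXY]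
  rw [div_mul_eq_mul_div, mul_div_assoc', div_eq_iff (hmY y).ne']
  ring
end

section
/- Let X be a random variable on ℤ, Y a random variable on a finite set, with joint pmf P. Let d : ℤ × ℤ → ℤ≥0. Define the MAP estimator X̂(y) = argmax_x P_{X|Y}(x|y). Then for every x with P(X = x, Y = y) > 0 and every integer r ≥ 1, Pr(d(X, X̂(Y)) ≥ r | X = x, Y = y) ≤ ( Σ_{x'} (d(x,x')/r)^{s/ρ} · (P_{X|Y}(x'|y)/P_{X|Y}(x|y))^{1/(ρ+1)} )^{ρ} for any ρ > 0 and s > 1. -/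
open Finset Real

/-- Pointwise MAP error bound: given `X = x`, `Y = y`, the conditional probability that
`d(X, X̂(Y)) ≥ r` (which is the indicator `1_{d(x, X̂(y)) ≥ r}`) is at most
`(Σ_{x'} (d(x,x')/r)^{s/ρ} (P_{X|Y}(x'|y)/P_{X|Y}(x|y))^{1/(ρ+1)})^ρ`. -/
theorem stmt13 {β : Type*} [Fintype β] (P : ℤ → β → ℝ) (hP : ∀ x y, 0 ≤ P x y)
    (hsum : ∀ y, Summable (fun x => P x y)) (hpmf : ∑ y, ∑' x : ℤ, P x y = 1)
    (Xhat : β → ℤ)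
    (hMAP : ∀ y x, P x y / (∑' x' : ℤ, P x' y) ≤ P (Xhat y) y / (∑' x' : ℤ, P x' y))
    (d : ℤ → ℤ → ℕ) (ρ s : ℝ) (hρ : 0 < ρ) (hs : 1 < s)
    (x : ℤ) (y : β) (hxy : 0 < P x y) (r : ℕ) (hr : 1 ≤ r)
    (hsummable : Summable (fun x' : ℤ => ((d x x' : ℝ) / (r : ℝ)) ^ (s / ρ) *
      ((P x' y / (∑' x'' : ℤ, P x'' y)) / (P x y / (∑' x'' : ℤ, P x'' y))) ^ (1 / (ρ + 1)))) :
    (if r ≤ d x (Xhat y) then (1 : ℝ) else 0) ≤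
      (∑' x' : ℤ, ((d x x' : ℝ) / (r : ℝ)) ^ (s / ρ) *
        ((P x' y / (∑' x'' : ℤ, P x'' y)) / (P x y / (∑' x'' : ℤ, P x'' y))) ^ (1 / (ρ + 1))) ^ ρ := by
  have hterm_nonneg : ∀ x' : ℤ, 0 ≤ ((d x x' : ℝ) / (r : ℝ)) ^ (s / ρ) *
      ((P x' y / (∑' x'' : ℤ, P x'' y)) / (P x y / (∑' x'' : ℤ, P x'' y))) ^ (1 / (ρ + 1)) := by
    intro x'
    apply mul_nonneg <;> apply Real.rpow_nonneg
    · positivity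
    · have := hP x' y
      have := hP x y
      have h0 : (0:ℝ) ≤ ∑' x'' : ℤ, P x'' y := tsum_nonneg fun i => hP i y
      positivity
  have htsum_nonneg : 0 ≤ ∑' x' : ℤ, ((d x x' : ℝ) / (r : ℝ)) ^ (s / ρ) *
      ((P x' y / (∑' x'' : ℤ, P x'' y)) / (P x y / (∑' x'' : ℤ, P x'' y))) ^ (1 / (ρ + 1)) :=
    tsum_nonneg hterm_nonneg
  split_ifs with h
  · -- the term at x' = Xhat y is ≥ 1
    have hQ : 0 < ∑' x'' : ℤ, P x'' y :=
      lt_of_lt_of_le hxy (Summable.le_tsum (hsum y) x fun i _ => hP i y)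
    have hcond : 0 < P x y / (∑' x'' : ℤ, P x'' y) := div_pos hxy hQ
    have h1 : (1:ℝ) ≤ ((d x (Xhat y) : ℝ) / (r : ℝ)) ^ (s / ρ) := by
      apply Real.one_le_rpow
      · rw [le_div_iff₀ (by exact_mod_cast Nat.pos_of_ne_zero (by omega)), one_mul]
        exact_mod_cast h
      · positivity
    have h2 : (1:ℝ) ≤ ((P (Xhat y) y / (∑' x'' : ℤ, P x'' y)) /
        (P x y / (∑' x'' : ℤ, P x'' y))) ^ (1 / (ρ + 1)) := by
      apply Real.one_le_rpow
      · rw [le_div_iff₀ hcond, one_mul]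
        exact hMAP y x
      · positivity
    have hge : (1:ℝ) ≤ ∑' x' : ℤ, ((d x x' : ℝ) / (r : ℝ)) ^ (s / ρ) *
        ((P x' y / (∑' x'' : ℤ, P x'' y)) / (P x y / (∑' x'' : ℤ, P x'' y))) ^ (1 / (ρ + 1)) := by
      calc (1:ℝ) ≤ ((d x (Xhat y) : ℝ) / (r : ℝ)) ^ (s / ρ) *
          ((P (Xhat y) y / (∑' x'' : ℤ, P x'' y)) /
            (P x y / (∑' x'' : ℤ, P x'' y))) ^ (1 / (ρ + 1)) := by
            calc (1:ℝ) = 1 * 1 := by ring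
            _ ≤ _ := mul_le_mul h1 h2 zero_le_one (le_trans zero_le_one h1)
      _ ≤ _ := Summable.le_tsum hsummable (Xhat y) fun i _ => hterm_nonneg i
    calc (1:ℝ) = 1 ^ ρ := (Real.one_rpow ρ).symm
    _ ≤ _ := Real.rpow_le_rpow zero_le_one hge hρ.le
  · exact Real.rpow_nonneg htsum_nonneg ρ
end

section
/- Let X be an integer-valued random variable, Y a random variable on a finite set, with joint pmf P. Let d : ℤ × ℤ → ℤ≥0 be a metric, ρ > 0, s > 1, and X̂^{MAP}(y) a maximizer of P_{X|Y}(·|y). Then E[d(X, X̂^{MAP}(Y))] ≤ ζ(s) · Σ_{y} P_Y(y) Σ_x P_{X|Y}(x|y)^{1/(ρ+1)} ( Σ_{x'} P_{X|Y}(x'|y)^{1/(ρ+1)} d(x,x')^{s/ρ} )^{ρ}, where ζ(s) = Σ_{r=1}^∞ r^{-s}. -/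
open Finset ENNReal

lemma stmt14_cast_helper (m : ℕ) (c : ℝ≥0∞) :
    ∑' n : ℕ, (if n < m then c else 0) = c * m := by
  rw [tsum_eq_sum (s := Finset.range m) (by intro n hn; simp at hn; simp [hn, Nat.not_lt.mpr hn])]
  simp [Finset.sum_ite_of_true, mul_comm]

lemma stmt14_aux_y (p : ℤ → ℝ≥0∞) (hfin : ∑' x : ℤ, p x ≠ ∞)
    (D : ℤ → ℤ → ℕ) (xh : ℤ)
    (hmap : ∀ x, p x / (∑' x' : ℤ, p x') ≤ p xh / (∑' x' : ℤ, p x'))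
    (ρ s : ℝ) (hρ : 0 < ρ) (hs : 1 < s) :
    ∑' x : ℤ, p x * (D x xh : ℝ≥0∞) ≤
      (∑' n : ℕ, ((n : ℝ≥0∞) + 1) ^ (-s)) *
        ((∑' x' : ℤ, p x') *
          ∑' x : ℤ, (p x / (∑' x' : ℤ, p x')) ^ (1 / (ρ + 1)) *
            (∑' x' : ℤ, (p x' / (∑' x'' : ℤ, p x'')) ^ (1 / (ρ + 1)) *
              (D x x' : ℝ≥0∞) ^ (s / ρ)) ^ ρ) := by
  set S := ∑' x : ℤ, p x with hS
  by_cases hS0 : S = 0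
  · have hz : ∀ x, p x = 0 := ENNReal.tsum_eq_zero.mp hS0
    simp [hz]
  set a : ℝ := 1 / (ρ + 1) with ha
  set Q : ℤ → ℝ≥0∞ := fun x => p x / S with hQ
  set T : ℤ → ℝ≥0∞ := fun x => ∑' x' : ℤ, (Q x') ^ a * (D x x' : ℝ≥0∞) ^ (s / ρ) with hT
  set B : ℝ≥0∞ := ∑' x : ℤ, (Q x) ^ a * (T x) ^ ρ with hB
  have hρ1 : ρ + 1 ≠ 0 := by positivity
  -- pointwise key claim
  have key : ∀ (n : ℕ) (x : ℤ), (if n < D x xh then p x else 0) ≤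
      ((n : ℝ≥0∞) + 1) ^ (-s) * (S * ((Q x) ^ a * (T x) ^ ρ)) := by
    intro n x
    split_ifs with hlt
    · by_cases hpx : p x = 0
      · simp [hpx]
      have hpxS : p x ≤ S := ENNReal.le_tsum x
      have hpxt : p x ≠ ∞ := fun h => hfin (top_le_iff.mp (h ▸ hpxS))
      have hQ0 : Q x ≠ 0 := by
        simp only [hQ, ne_eq, ENNReal.div_eq_zero_iff, not_or]
        exact ⟨hpx, hfin⟩
      have hQt : Q x ≠ ∞ := by
        simp only [hQ]
        exact (ENNReal.div_lt_top hpxt hS0).ne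
      set r : ℝ≥0∞ := (n : ℝ≥0∞) + 1 with hr
      have hr0 : r ≠ 0 := by simp [hr]
      have hrt : r ≠ ∞ := by simp [hr]
      have h1 : (1 : ℝ≥0∞) ≤ r ^ (-s) * ((D x xh : ℝ≥0∞) ^ (s / ρ)) ^ ρ := by
        have hD : r ≤ (D x xh : ℝ≥0∞) := by
          have : ((n + 1 : ℕ) : ℝ≥0∞) ≤ ((D x xh : ℕ) : ℝ≥0∞) := by
            exact_mod_cast Nat.cast_le.mpr hlt
          simpa [hr] using this
        have hpow : r ^ s ≤ ((D x xh : ℝ≥0∞)) ^ s :=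
          ENNReal.rpow_le_rpow hD (by linarith)
        calc (1 : ℝ≥0∞) = r ^ (-s) * r ^ s := by
              rw [← ENNReal.rpow_add _ _ hr0 hrt]; simp
          _ ≤ r ^ (-s) * ((D x xh : ℝ≥0∞)) ^ s := by gcongr
          _ = r ^ (-s) * ((D x xh : ℝ≥0∞) ^ (s / ρ)) ^ ρ := by
              rw [← ENNReal.rpow_mul]
              congr 1
              field_simp
      have hsplit : (Q x) ^ a * (Q x) ^ (ρ / (ρ + 1)) = Q x := by
        rw [← ENNReal.rpow_add _ _ hQ0 hQt]
        rw [show a + ρ / (ρ + 1) = 1 by rw [ha]; field_simp; ring]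
        exact ENNReal.rpow_one _
      have h2 : p x ≤ S * ((Q x) ^ a * ((Q xh) ^ a) ^ ρ) := by
        calc p x = S * Q x := by
              rw [hQ]; exact (ENNReal.mul_div_cancel hS0 hfin).symm
          _ = S * ((Q x) ^ a * (Q x) ^ (ρ / (ρ + 1))) := by rw [hsplit]
          _ ≤ S * ((Q x) ^ a * (Q xh) ^ (ρ / (ρ + 1))) := by
              gcongr
              exact hmap x
          _ = S * ((Q x) ^ a * ((Q xh) ^ a) ^ ρ) := by
              rw [← ENNReal.rpow_mul, show a * ρ = ρ / (ρ + 1) by rw [ha]; field_simp]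
      calc p x ≤ (S * ((Q x) ^ a * ((Q xh) ^ a) ^ ρ)) * 1 := by rw [mul_one]; exact h2
        _ ≤ (S * ((Q x) ^ a * ((Q xh) ^ a) ^ ρ)) *
            (r ^ (-s) * ((D x xh : ℝ≥0∞) ^ (s / ρ)) ^ ρ) := by gcongr
        _ = r ^ (-s) * (S * ((Q x) ^ a *
            ((Q xh) ^ a * (D x xh : ℝ≥0∞) ^ (s / ρ)) ^ ρ)) := by
            rw [ENNReal.mul_rpow_of_nonneg _ _ hρ.le]; ring
        _ ≤ r ^ (-s) * (S * ((Q x) ^ a * (T x) ^ ρ)) := by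
            gcongr
            exact ENNReal.le_tsum xh
    · exact zero_le
  calc ∑' x : ℤ, p x * (D x xh : ℝ≥0∞)
      = ∑' x : ℤ, ∑' n : ℕ, (if n < D x xh then p x else 0) := by
        exact tsum_congr fun x => (stmt14_cast_helper _ _).symm
    _ = ∑' n : ℕ, ∑' x : ℤ, (if n < D x xh then p x else 0) := ENNReal.tsum_comm
    _ ≤ ∑' n : ℕ, ∑' x : ℤ, ((n : ℝ≥0∞) + 1) ^ (-s) * (S * ((Q x) ^ a * (T x) ^ ρ)) := by
        exact ENNReal.tsum_le_tsum fun n => ENNReal.tsum_le_tsum fun x => key n x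
    _ = ∑' n : ℕ, ((n : ℝ≥0∞) + 1) ^ (-s) * (S * B) := by
        refine tsum_congr fun n => ?_
        rw [ENNReal.tsum_mul_left, ENNReal.tsum_mul_left]
    _ = (∑' n : ℕ, ((n : ℝ≥0∞) + 1) ^ (-s)) * (S * B) := ENNReal.tsum_mul_right

/-- Expected MAP estimation error bound:
`E[d(X, X̂^{MAP}(Y))] ≤ ζ(s) Σ_y P_Y(y) Σ_x P_{X|Y}(x|y)^{1/(ρ+1)}
  (Σ_{x'} P_{X|Y}(x'|y)^{1/(ρ+1)} d(x,x')^{s/ρ})^ρ`, stated in `[0,∞]`. -/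
theorem stmt14 {β : Type*} [Fintype β] (P : ℤ → β → ℝ≥0∞)
    (hpmf : ∑ y, ∑' x : ℤ, P x y = 1)
    (d : ℤ → ℤ → ℕ) (hd0 : ∀ a b, d a b = 0 ↔ a = b)
    (hdsymm : ∀ a b, d a b = d b a) (hdtri : ∀ a b c, d a c ≤ d a b + d b c)
    (Xhat : β → ℤ)
    (hMAP : ∀ y x, P x y / (∑' x' : ℤ, P x' y) ≤ P (Xhat y) y / (∑' x' : ℤ, P x' y))
    (ρ s : ℝ) (hρ : 0 < ρ) (hs : 1 < s) :
    ∑ y, ∑' x : ℤ, P x y * (d x (Xhat y) : ℝ≥0∞) ≤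
      (∑' n : ℕ, ((n : ℝ≥0∞) + 1) ^ (-s)) *
        ∑ y, (∑' x' : ℤ, P x' y) *
          ∑' x : ℤ, (P x y / (∑' x' : ℤ, P x' y)) ^ (1 / (ρ + 1)) *
            (∑' x' : ℤ, (P x' y / (∑' x'' : ℤ, P x'' y)) ^ (1 / (ρ + 1)) *
              (d x x' : ℝ≥0∞) ^ (s / ρ)) ^ ρ := by
  rw [Finset.mul_sum]
  refine Finset.sum_le_sum fun y _ => ?_
  have hfin : ∑' x : ℤ, P x y ≠ ∞ := by
    have hle : ∑' x : ℤ, P x y ≤ 1 := by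
      rw [← hpmf]
      exact Finset.single_le_sum (f := fun y => ∑' x : ℤ, P x y)
        (fun _ _ => zero_le) (Finset.mem_univ y)
    exact ne_top_of_le_ne_top ENNReal.one_ne_top hle
  exact stmt14_aux_y (fun x => P x y) hfin d (Xhat y) (hMAP y) ρ s hρ hs
end
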